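/- Let V ⊆ ℝ_max^n be the max-plus cone generated by vectors v^1,...,v^p ∈ ℝ^n (all entries finite), and let H = {x ∈ ℝ_max^n : max_{i∈I}(a_i + x_i) ≤ max_{j∈J}(a_j + x_j)}, with I, J disjoint, I ∪ J = {1,...,n}, a ∈ ℝ^n, be a half-space minimal with respect to V. Then the apex −a = (−a_1,...,−a_n) of H belongs to V. -/

import Mathlib

noncomputable section

/-- The max-plus (tropical) semiring `ℝ ∪ {-∞}`:
addition is `max`, multiplication is `+` (with `-∞` absorbing). -/
abbrev Rmax : Type := WithBot ℝ

/-- A max-plus (tropical) cone: a set stable under max-plus linear combinations. -/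
def IsTropCone {ι : Type} (V : Set (ι → Rmax)) : Prop :=
  ∀ u ∈ V, ∀ w ∈ V, ∀ lam mu : Rmax, (fun i => max (lam + u i) (mu + w i)) ∈ V

/-- `tropCone X`: the set of all max-plus linear combinations of finitely many
elements of `X`. -/
def tropCone {ι : Type} (X : Set (ι → Rmax)) : Set (ι → Rmax) :=
  {x | ∃ (m : ℕ) (lam : Fin m → Rmax) (w : Fin m → ι → Rmax),
        (∀ s, w s ∈ X) ∧ x = fun i => Finset.univ.sup (fun s => lam s + w s i)}

/-- `tropCo X`: max-plus convex combinations (coefficients with maximum `0 = 𝟙`)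
of finitely many elements of `X`. -/
def tropCo {ι : Type} (X : Set (ι → Rmax)) : Set (ι → Rmax) :=
  {x | ∃ (m : ℕ) (lam : Fin m → Rmax) (w : Fin m → ι → Rmax),
        (∀ s, w s ∈ X) ∧ Finset.univ.sup lam = (0 : Rmax) ∧
        x = fun i => Finset.univ.sup (fun s => lam s + w s i)}

/-- Max-plus Minkowski sum of two subsets. -/
def tropSum {ι : Type} (A B : Set (ι → Rmax)) : Set (ι → Rmax) :=
  {z | ∃ a ∈ A, ∃ b ∈ B, z = fun i => max (a i) (b i)}

/-- A half-space of `ℝ_max^ι`. -/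
def IsHalfSpace {ι : Type} [Fintype ι] (H : Set (ι → Rmax)) : Prop :=
  ∃ a b : ι → Rmax,
    H = {x | Finset.univ.sup (fun i => a i + x i) ≤ Finset.univ.sup (fun j => b j + x j)}

/-- An affine half-space of `ℝ_max^ι`. -/
def IsAffineHalfSpace {ι : Type} [Fintype ι] (H : Set (ι → Rmax)) : Prop :=
  ∃ (a b : ι → Rmax) (c d : Rmax),
    H = {x | max (Finset.univ.sup (fun i => a i + x i)) c ≤
             max (Finset.univ.sup (fun j => b j + x j)) d}

/-- A max-plus polyhedron: an intersection of finitely many affine half-spaces. -/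
def IsPolyhedron {ι : Type} [Fintype ι] (C : Set (ι → Rmax)) : Prop :=
  ∃ (m : ℕ) (H : Fin m → Set (ι → Rmax)),
    (∀ k, IsAffineHalfSpace (H k)) ∧ C = ⋂ k, H k

/-- The recession cone of a max-plus convex set. -/
def recessionCone {ι : Type} (C : Set (ι → Rmax)) : Set (ι → Rmax) :=
  {u | ∃ x ∈ C, ∀ lam : Rmax, (fun i => max (x i) (lam + u i)) ∈ C}

/-- A half-space minimal (for inclusion) among the half-spaces containing `V`. -/
def IsMinimalHalfSpace {ι : Type} [Fintype ι] (V H : Set (ι → Rmax)) : Prop :=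
  IsHalfSpace H ∧ V ⊆ H ∧ ¬ ∃ H', IsHalfSpace H' ∧ V ⊆ H' ∧ H' ⊂ H

/-- The half-space written in normal form: `max_{i ∈ I} (a i + x i) ≤ max_{j ∈ J} (a j + x j)`
(the sup over an empty index set being `⊥ = -∞`). -/
def halfSpace {ι : Type} (I J : Finset ι) (a : ι → ℝ) : Set (ι → Rmax) :=
  {x | I.sup (fun i => ((a i : Rmax)) + x i) ≤ J.sup (fun j => ((a j : Rmax)) + x j)}

/-- The max-plus cone generated by the vectors `v 0, …, v (p-1)` (finite entries). -/
def genCone {ι : Type} [Fintype ι] {p : ℕ} (v : Fin p → ι → ℝ) : Set (ι → Rmax) :=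
  {x | ∃ lam : Fin p → Rmax, x = fun i => Finset.univ.sup (fun r => lam r + ((v r i : Rmax)))}

/-- `S_j(x)`: the `j`-th component of the type of `x` relative to the generators `v`. -/
def typeSet {ι : Type} {p : ℕ} (v : Fin p → ι → ℝ) (x : ι → ℝ) (j : ι) : Set (Fin p) :=
  {r | v r j - x j = ⨆ k, (v r k - x k)}

/-- `V` has full support. -/
def HasFullSupport {ι : Type} (V : Set (ι → Rmax)) : Prop :=
  ∀ k : ι, ∃ v ∈ V, v k ≠ ⊥

/-- `x` is a vertex of the natural cell decomposition induced by the generators `v`: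
the cell of `type(x)` consists exactly of the (finite) scalar multiples of `x`. -/
def IsVertex {ι : Type} {p : ℕ} (v : Fin p → ι → ℝ) (x : ι → ℝ) : Prop :=
  {y : ι → ℝ | ∀ j, typeSet v x j ⊆ typeSet v y j} = {y | ∃ c : ℝ, y = fun i => c + x i}

/-- The `i`-th max-plus unit vector. -/
def unitVec {ι : Type} [DecidableEq ι] (i : ι) : ι → Rmax :=
  fun k => if k = i then (0 : Rmax) else ⊥

/-- The vector `⊕_{j ∈ J} b j ⊙ e^j`. -/
def jVec {ι : Type} [DecidableEq ι] (J : Finset ι) (b : ι → ℝ) : ι → Rmax :=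
  fun k => if k ∈ J then ((b k : Rmax)) else ⊥

/-- The polar of a max-plus cone: the set of (pairs defining) half-spaces containing it. -/
def polar {ι : Type} [Fintype ι] (V : Set (ι → Rmax)) : Set ((ι → Rmax) × (ι → Rmax)) :=
  {q | ∀ x ∈ V, Finset.univ.sup (fun i => q.1 i + x i) ≤ Finset.univ.sup (fun j => q.2 j + x j)}

/-- Extreme vector of a max-plus cone of pairs (e.g. the polar). -/
def IsExtremePair {ι : Type} (W : Set ((ι → Rmax) × (ι → Rmax)))
    (z : (ι → Rmax) × (ι → Rmax)) : Prop :=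
  z ∈ W ∧ z ≠ (fun _ => (⊥ : Rmax), fun _ => (⊥ : Rmax)) ∧
    ∀ u ∈ W, ∀ w ∈ W,
      z = (fun i => max (u.1 i) (w.1 i), fun i => max (u.2 i) (w.2 i)) → z = u ∨ z = w

/-- Extreme point of a max-plus convex set. -/
def IsExtremePoint {ι : Type} (C : Set (ι → Rmax)) (z : ι → Rmax) : Prop :=
  z ∈ C ∧ ∀ u ∈ C, ∀ w ∈ C, ∀ lam mu : Rmax, max lam mu = (0 : Rmax) →
    z = (fun i => max (lam + u i) (mu + w i)) → z = u ∨ z = w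

/-- Extreme vector of a max-plus cone. -/
def IsExtremeVector {ι : Type} (W : Set (ι → Rmax)) (z : ι → Rmax) : Prop :=
  z ∈ W ∧ z ≠ (fun _ => (⊥ : Rmax)) ∧
    ∀ u ∈ W, ∀ w ∈ W, z = (fun i => max (u i) (w i)) → z = u ∨ z = w

/-- Projection of a subset of `ℝ_max^ι` onto the coordinates indexed by `K`. -/
def projCone {ι : Type} (K : Finset ι) (V : Set (ι → Rmax)) :
    Set ({k : ι // k ∈ K} → Rmax) :=
  {y | ∃ x ∈ V, y = fun k => x k.1}

/-! Let `y = -a` and let `z` be the max-plus projection of `y` onto `V`, i.e. the greatest element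
of `V` below `y`. Since every generator `v r` lies in `H` and `I ∪ J` covers all coordinates, the
maximum of `a k + v r k` is attained at some `j ∈ J`, and there `z j = y j`. Hence `V` lies in the
half-space with apex `z` whose right-hand side runs over `{j ∈ J | z j = y j}`. That half-space is
contained in `H`, so by minimality it is `H`; as `y ∈ H`, this forces `y ≤ z`, whence `y = z ∈ V`.
-/

open Finset

section HalfSpace

variable {ι : Type}

theorem coe_mem_halfSpace_iff (I J : Finset ι) (c u : ι → ℝ) :
    (fun i => (u i : Rmax)) ∈ halfSpace I J c ↔ ∀ i ∈ I, ∃ j ∈ J, c i + u i ≤ c j + u j := by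
  simp only [halfSpace, Set.mem_ofPred_eq, Finset.sup_le_iff]
  refine forall₂_congr fun i _ => ?_
  rw [← WithBot.coe_add, Finset.le_sup_iff (WithBot.bot_lt_coe _)]
  simp only [← WithBot.coe_add, WithBot.coe_le_coe]

theorem isHalfSpace_halfSpace [Fintype ι] (I J : Finset ι) (c : ι → ℝ) :
    IsHalfSpace (halfSpace I J c) := by
  classical
  have key : ∀ (K : Finset ι) (x : ι → Rmax),
      univ.sup (fun i => (if i ∈ K then (c i : Rmax) else ⊥) + x i) =
        K.sup fun i => (c i : Rmax) + x i := by
    intro K x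
    simp only [ite_add, WithBot.bot_add, Finset.sup_ite, filter_univ_mem, sup_bot, sup_bot_eq]
  exact ⟨fun i => if i ∈ I then (c i : Rmax) else ⊥, fun j => if j ∈ J then (c j : Rmax) else ⊥,
    Set.ext fun x => by simp only [halfSpace, Set.mem_ofPred_eq, key]⟩

theorem halfSpace_subset_halfSpace {I J I' J' : Finset ι} {c c' : ι → ℝ} (hI : I ⊆ I')
    (hJ : J' ⊆ J) (hc : ∀ i ∈ I, c i ≤ c' i) (hc' : ∀ j ∈ J', c' j = c j) :
    halfSpace I' J' c' ⊆ halfSpace I J c := by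
  intro x hx
  simp only [halfSpace, Set.mem_ofPred_eq] at hx ⊢
  calc I.sup (fun i => (c i : Rmax) + x i)
      ≤ I'.sup (fun i => (c' i : Rmax) + x i) :=
        Finset.sup_le fun i hi => le_sup_of_le (hI hi) (by gcongr; exact_mod_cast hc i hi)
    _ ≤ J'.sup (fun j => (c' j : Rmax) + x j) := hx
    _ ≤ J.sup (fun j => (c j : Rmax) + x j) :=
        Finset.sup_le fun j hj => le_sup_of_le (hJ hj) (by rw [hc' j hj])

theorem genCone_subset_halfSpace [Fintype ι] {p : ℕ} {v : Fin p → ι → ℝ} {I J : Finset ι}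
    {c : ι → ℝ} (hv : ∀ r, (fun i => (v r i : Rmax)) ∈ halfSpace I J c) :
    genCone v ⊆ halfSpace I J c := by
  rintro _ ⟨μ, rfl⟩
  simp only [halfSpace, Set.mem_ofPred_eq, Finset.sup_le_iff]
  intro i hi
  rw [Finset.apply_sup_eq_sup_comp_of_linearOrder (fun x => (c i : Rmax) + x)
    (fun _ _ h => add_le_add_right h _) (WithBot.add_bot _)]
  refine Finset.sup_le fun r _ => ?_
  obtain ⟨j, hj, hle⟩ := (coe_mem_halfSpace_iff I J c (v r)).1 (hv r) i hi
  calc (c i : Rmax) + (μ r + v r i) = μ r + ((c i + v r i : ℝ) : Rmax) := by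
        rw [WithBot.coe_add, add_left_comm]
    _ ≤ μ r + ((c j + v r j : ℝ) : Rmax) := by gcongr; exact_mod_cast hle
    _ = (c j : Rmax) + (μ r + v r j) := by rw [WithBot.coe_add, add_left_comm]
    _ ≤ J.sup fun j => (c j : Rmax) + univ.sup fun s => μ s + v s j := by
        refine le_sup_of_le hj ?_
        gcongr
        exact le_sup_of_le (mem_univ r) le_rfl

end HalfSpace

section Cone

variable {ι : Type} [Fintype ι]

theorem coe_mem_genCone {p : ℕ} (v : Fin p → ι → ℝ) (r : Fin p) :
    (fun i => (v r i : Rmax)) ∈ genCone v := by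
  classical
  refine ⟨fun s => if s = r then 0 else ⊥, funext fun i => le_antisymm ?_ ?_⟩
  · exact le_sup_of_le (mem_univ r) (by simp)
  · refine Finset.sup_le fun s _ => ?_
    dsimp only
    split_ifs with hs
    · rw [hs, zero_add]
    · rw [WithBot.bot_add]; exact bot_le

theorem exists_max_mem_right_of_coe_mem_halfSpace [DecidableEq ι] [Nonempty ι] {I J : Finset ι}
    (hU : I ∪ J = univ) {c u : ι → ℝ} (hu : (fun i => (u i : Rmax)) ∈ halfSpace I J c) :
    ∃ j ∈ J, ∀ k, c k + u k ≤ c j + u j := by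
  obtain ⟨k, -, hk⟩ := exists_max_image univ (fun i => c i + u i) univ_nonempty
  rcases mem_union.1 (hU ▸ mem_univ k : k ∈ I ∪ J) with hkI | hkJ
  · obtain ⟨j, hj, hkj⟩ := (coe_mem_halfSpace_iff I J c u).1 hu k hkI
    exact ⟨j, hj, fun i => (hk i (mem_univ i)).trans hkj⟩
  · exact ⟨k, hkJ, fun i => hk i (mem_univ i)⟩

theorem IsMinimalHalfSpace.eq_of_subset {V H H' : Set (ι → Rmax)} (hmin : IsMinimalHalfSpace V H)
    (hH' : IsHalfSpace H') (hV : V ⊆ H') (hsub : H' ⊆ H) : H' = H := by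
  by_contra hne
  exact hmin.2.2 ⟨H', hH', hV, hsub.ssubset_of_ne hne⟩

end Cone

section Projection

variable {ι : Type} [Fintype ι] [Nonempty ι] {p : ℕ}

def projCoeff (v : Fin p → ι → ℝ) (y : ι → ℝ) (r : Fin p) : ℝ :=
  univ.inf' univ_nonempty fun i => y i - v r i

theorem projCoeff_eq {v : Fin p → ι → ℝ} {y : ι → ℝ} {r : Fin p} {k : ι}
    (hk : ∀ i, y k - v r k ≤ y i - v r i) : projCoeff v y r = y k - v r k :=
  le_antisymm (inf'_le _ (mem_univ k)) (le_inf' _ _ fun i _ => hk i)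

variable [NeZero p] (v : Fin p → ι → ℝ) (y : ι → ℝ)

/-- The max-plus projection of `y` onto `genCone v`: the greatest element of the cone below `y`. -/
def tropProj (k : ι) : ℝ := univ.sup' univ_nonempty fun r => projCoeff v y r + v r k

theorem projCoeff_add_le_tropProj (r : Fin p) (k : ι) :
    projCoeff v y r + v r k ≤ tropProj v y k :=
  le_sup' (fun r => projCoeff v y r + v r k) (mem_univ r)

theorem tropProj_le (k : ι) : tropProj v y k ≤ y k := by
  refine sup'_le _ _ fun r _ => ?_
  have := inf'_le (fun i => y i - v r i) (mem_univ k)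
  rw [projCoeff]
  linarith

theorem coe_tropProj_mem_genCone : (fun k => (tropProj v y k : Rmax)) ∈ genCone v :=
  ⟨fun r => (projCoeff v y r : Rmax), funext fun k => by
    simp only [tropProj, coe_sup', Function.comp_def, WithBot.coe_add]⟩

variable {v y}

theorem tropProj_eq {r : Fin p} {k : ι} (hk : ∀ i, y k - v r k ≤ y i - v r i) :
    tropProj v y k = y k := by
  refine le_antisymm (tropProj_le v y k) ?_
  have := projCoeff_add_le_tropProj v y r k
  rw [projCoeff_eq hk] at this
  linarith

theorem genCone_subset_halfSpace_tropProj {K : Finset ι}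
    (hK : ∀ r, ∃ k ∈ K, ∀ i, y k - v r k ≤ y i - v r i) :
    genCone v ⊆ halfSpace univ (K.filter fun k => tropProj v y k = y k) (-tropProj v y) := by
  refine genCone_subset_halfSpace fun r => (coe_mem_halfSpace_iff _ _ _ _).2 fun i _ => ?_
  obtain ⟨k, hkK, hk⟩ := hK r
  refine ⟨k, mem_filter.2 ⟨hkK, tropProj_eq hk⟩, ?_⟩
  have := projCoeff_add_le_tropProj v y r i
  simp only [Pi.neg_apply, tropProj_eq hk, projCoeff_eq hk] at this ⊢
  linarith

end Projection

theorem stmt_12_general {n p : ℕ} (hp : 0 < p) (v : Fin p → Fin n → ℝ)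
    (I J : Finset (Fin n)) (a : Fin n → ℝ)
    (hU : I ∪ J = Finset.univ)
    (hmin : IsMinimalHalfSpace (genCone v) (halfSpace I J a)) :
    (fun i => ((-(a i) : ℝ) : Rmax)) ∈ genCone v := by
  rcases isEmpty_or_nonempty (Fin n) with _ | _
  · exact ⟨fun _ => ⊥, funext isEmptyElim⟩
  have : NeZero p := ⟨hp.ne'⟩
  set y : Fin n → ℝ := fun i => -a i
  have hmax : ∀ r, ∃ j ∈ J, ∀ i, y j - v r j ≤ y i - v r i := fun r => by
    obtain ⟨j, hj, hle⟩ :=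
      exists_max_mem_right_of_coe_mem_halfSpace hU (hmin.2.1 (coe_mem_genCone v r))
    exact ⟨j, hj, fun i => by simp only [y]; linarith [hle i]⟩
  set K := J.filter fun j => tropProj v y j = y j
  have hKH : halfSpace univ K (-tropProj v y) = halfSpace I J a :=
    hmin.eq_of_subset (isHalfSpace_halfSpace _ _ _) (genCone_subset_halfSpace_tropProj hmax)
      (halfSpace_subset_halfSpace (subset_univ I) (filter_subset _ J)
        (fun i _ => by simp only [Pi.neg_apply]; linarith [tropProj_le v y i])
        fun j hj => by simp only [Pi.neg_apply, (mem_filter.1 hj).2, y, neg_neg])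
  have hyK : (fun i => (y i : Rmax)) ∈ halfSpace univ K (-tropProj v y) := by
    rw [hKH, coe_mem_halfSpace_iff]
    obtain ⟨j, hj, -⟩ := hmax ⟨0, hp⟩
    exact fun _ _ => ⟨j, hj, by simp [y]⟩
  have hproj : tropProj v y = y := funext fun i => by
    obtain ⟨j, hj, hle⟩ := (coe_mem_halfSpace_iff _ _ _ _).1 hyK i (mem_univ i)
    simp only [Pi.neg_apply, (mem_filter.1 hj).2] at hle
    linarith [tropProj_le v y i]
  simpa [hproj] using coe_tropProj_mem_genCone v y

/-- the apex of a minimal half-space belongs to the cone. -/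
theorem stmt_12 {n p : ℕ} (hp : 0 < p) (v : Fin p → Fin n → ℝ)
    (I J : Finset (Fin n)) (a : Fin n → ℝ) (hIJ : Disjoint I J)
    (hU : I ∪ J = Finset.univ)
    (hmin : IsMinimalHalfSpace (genCone v) (halfSpace I J a)) :
    (fun i => ((-(a i) : ℝ) : Rmax)) ∈ genCone v :=
  stmt_12_general hp v I J a hU hmin
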